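/- arXiv:2109.01131 — 2 statements merged into one kernel-verified Lean document; each statement's English description precedes it below -/
import Mathlib

section
/- Let D ⊆ ℕ⁺ be ∅-definable and cofinal with respect to divisibility (for every c ∈ ℕ⁺ there exists d ∈ D with c ∣ d). Then for every squarefree r ∈ ℕ⁺ there exist d₁, d₂ ∈ D such that the set of prime divisors of r equals the intersection of the set of prime divisors of d₁ with the set of prime divisors of d₂. -/
open FirstOrder Language

/-- The language `L` with one binary function symbol `·` and one constant symbol `1`. -/
def L : FirstOrder.Language :=
  ⟨fun n => match n with | 0 => Unit | 2 => Unit | _ => Empty, fun _ => Empty⟩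

/-- Any monoid is an `L`-structure, with `·` interpreted as multiplication and `1` as the
identity. In particular `ℕ+` is the standard model of Skolem arithmetic, and
`Multiplicative ℕ` is the additive `L`-structure `(ℕ, +, 0)`. -/
instance (M : Type*) [Monoid M] : L.Structure M where
  funMap {n} f x :=
    match n, f, x with
    | 0, _, _ => 1
    | 2, _, x => x 0 * x 1
  RelMap r _ := r.elim

/-- The set of prime divisors of `a` (as positive naturals). -/
def sigma' (a : ℕ+) : Set ℕ+ := {p | (p : ℕ).Prime ∧ p ∣ a}

/-!
A `∅`-definable subset of `ℕ+` is invariant under every automorphism of `(ℕ+, ·, 1)`, and every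
permutation of the primes induces such an automorphism. Pick `d ∈ D` with `r ∣ d` and a
permutation fixing the prime factors of `r` while sending the remaining prime factors of `d` to
primes not dividing `d`. The image of `d` is again in `D` and divisible by `r`, and it shares
with `d` only the prime factors of `r`.
-/

theorem Infinite.exists_perm_moving_off_finset {α : Type*} [Infinite α] (s t : Finset α) :
    ∃ π : Equiv.Perm α, (∀ x ∈ s, π x ∉ t) ∧ ∀ x ∈ t, x ∉ s → π x = x := by
  classical
  induction s using Finset.induction_on with
  | empty => exact ⟨1, by simp, fun _ _ _ => rfl⟩
  | @insert a s ha ih =>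
    -- `π * swap a b` sends `a` to `π b`, so `b` is chosen with `π b ∉ t`.
    obtain ⟨π, hmoved, hfixed⟩ := ih
    obtain ⟨b, hb⟩ := Infinite.exists_notMem_finset (insert a (s ∪ t ∪ t.image π.symm))
    simp only [Finset.mem_insert, Finset.mem_union, Finset.mem_image, not_or] at hb
    obtain ⟨hba, ⟨hbs, hbt⟩, hbπ⟩ := hb
    have hπb : π b ∉ t := fun h => hbπ ⟨π b, h, π.symm_apply_apply b⟩
    refine ⟨π * Equiv.swap a b, ?_, ?_⟩
    · intro x hx
      rcases Finset.mem_insert.1 hx with rfl | hx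
      · simpa using hπb
      · rw [Equiv.Perm.mul_apply, Equiv.swap_apply_of_ne_of_ne (ne_of_mem_of_not_mem hx ha)
          (ne_of_mem_of_not_mem hx hbs)]
        exact hmoved x hx
    · intro x hxt hx
      rw [Finset.mem_insert, not_or] at hx
      rw [Equiv.Perm.mul_apply, Equiv.swap_apply_of_ne_of_ne hx.1 (ne_of_mem_of_not_mem hxt hbt)]
      exact hfixed x hxt hx.2

def MulEquiv.toLEquiv {M N : Type*} [Monoid M] [Monoid N] (e : M ≃* N) : M ≃[L] N where
  toEquiv := e.toEquiv
  map_fun' {n} f x := by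
    match n, f with
    | 0, _ => exact e.map_one
    | 2, _ => exact e.map_mul (x 0) (x 1)
  map_rel' r := r.elim

theorem realize_mulEquiv_comp_iff {M N α : Type*} [Monoid M] [Monoid N] (e : M ≃* N)
    (φ : L.Formula α) (v : α → M) : φ.Realize (e ∘ v) ↔ φ.Realize v :=
  StrongHomClass.realize_formula e.toLEquiv φ

def PrimeMultiset.mapAddEquiv (π : Equiv.Perm Nat.Primes) : PrimeMultiset ≃+ PrimeMultiset where
  toFun v := Multiset.map π v
  invFun v := Multiset.map π.symm v
  left_inv v := (Multiset.map_map _ _ v).trans <| by rw [π.symm_comp_self]; exact Multiset.map_id v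
  right_inv v := (Multiset.map_map _ _ v).trans <| by rw [π.self_comp_symm]; exact Multiset.map_id v
  map_add' := Multiset.map_add π

namespace PNat

def factorMultisetMulEquiv : ℕ+ ≃* Multiplicative PrimeMultiset where
  toEquiv := factorMultisetEquiv.trans Multiplicative.ofAdd
  map_mul' := factorMultiset_mul

def mulEquivOfPermPrimes (π : Equiv.Perm Nat.Primes) : ℕ+ ≃* ℕ+ :=
  factorMultisetMulEquiv.trans <|
    (AddEquiv.toMultiplicative (PrimeMultiset.mapAddEquiv π)).trans factorMultisetMulEquiv.symm

theorem factorMultiset_mulEquivOfPermPrimes (π : Equiv.Perm Nat.Primes) (n : ℕ+) :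
    (mulEquivOfPermPrimes π n).factorMultiset = Multiset.map π n.factorMultiset :=
  PrimeMultiset.factorMultiset_prod (Multiset.map π n.factorMultiset)

def primeFactors (n : ℕ+) : Finset Nat.Primes := Multiset.toFinset n.factorMultiset

theorem mem_primeFactors {n : ℕ+} {q : Nat.Primes} : q ∈ n.primeFactors ↔ (q : ℕ+) ∣ n :=
  Multiset.mem_toFinset.trans <|
    (Multiset.mem_map_of_injective Nat.Primes.coe_pnat_injective).symm.trans <|
      mem_factorMultiset.trans (and_iff_right q.2)

theorem primeFactors_mulEquivOfPermPrimes (π : Equiv.Perm Nat.Primes) (n : ℕ+) :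
    (mulEquivOfPermPrimes π n).primeFactors = n.primeFactors.image π :=
  (congrArg Multiset.toFinset (factorMultiset_mulEquivOfPermPrimes π n)).trans
    (Multiset.toFinset_map _ _)

theorem mulEquivOfPermPrimes_eq_self {π : Equiv.Perm Nat.Primes} {n : ℕ+}
    (h : ∀ q ∈ n.primeFactors, π q = q) : mulEquivOfPermPrimes π n = n :=
  factorMultisetEquiv.injective <| (factorMultiset_mulEquivOfPermPrimes π n).trans <|
    (Multiset.map_congr rfl fun q hq => h q (Multiset.mem_toFinset.2 hq)).trans
      (Multiset.map_id _)

end PNat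

theorem sigma'_subset_of_dvd {r d : ℕ+} (h : r ∣ d) : sigma' r ⊆ sigma' d :=
  fun _ ⟨hp, hpr⟩ => ⟨hp, hpr.trans h⟩

theorem sigma'_eq_image_primeFactors (n : ℕ+) :
    sigma' n = (↑) '' (n.primeFactors : Set Nat.Primes) := by
  ext p
  refine ⟨fun ⟨hp, hpn⟩ => ⟨⟨p, hp⟩, PNat.mem_primeFactors.2 hpn, rfl⟩, ?_⟩
  rintro ⟨q, hq, rfl⟩
  exact ⟨q.2, PNat.mem_primeFactors.1 hq⟩

theorem exists_mulEquivOfPermPrimes_dvd_and_sigma'_inter_subset {r d : ℕ+} (h : r ∣ d) :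
    ∃ π, r ∣ PNat.mulEquivOfPermPrimes π d ∧
      sigma' d ∩ sigma' (PNat.mulEquivOfPermPrimes π d) ⊆ sigma' r := by
  obtain ⟨π, hmoved, hfixed⟩ :=
    Infinite.exists_perm_moving_off_finset (d.primeFactors \ r.primeFactors) d.primeFactors
  have hrd : r.primeFactors ⊆ d.primeFactors := fun q hq =>
    PNat.mem_primeFactors.2 ((PNat.mem_primeFactors.1 hq).trans h)
  have hr : PNat.mulEquivOfPermPrimes π r = r := PNat.mulEquivOfPermPrimes_eq_self fun q hq =>
    hfixed q (hrd hq) fun hq' => (Finset.mem_sdiff.1 hq').2 hq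
  refine ⟨π, hr ▸ map_dvd _ h, ?_⟩
  simp only [sigma'_eq_image_primeFactors, ← Set.image_inter Nat.Primes.coe_pnat_injective]
  refine Set.image_mono ?_
  rintro q ⟨hqd, hqe⟩
  rw [Finset.mem_coe, PNat.primeFactors_mulEquivOfPermPrimes, Finset.mem_image] at hqe
  obtain ⟨x, hxd, rfl⟩ := hqe
  by_cases hxr : x ∈ r.primeFactors
  · rwa [hfixed x hxd fun hx => (Finset.mem_sdiff.1 hx).2 hxr]
  · exact absurd hqd (hmoved x (Finset.mem_sdiff.2 ⟨hxd, hxr⟩))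

/-- If `D ⊆ ℕ⁺` is `∅`-definable and cofinal with respect to divisibility, then the set of
prime divisors of any squarefree element is the intersection of the sets of prime divisors
of two elements of `D`. -/
theorem cofinal_dcl_contains_radicals (D : Set ℕ+)
    (hdef : ∃ φ : L.Formula (Fin 1), D = {a | φ.Realize (fun _ => a)})
    (hcof : ∀ c : ℕ+, ∃ d ∈ D, c ∣ d) :
    ∀ r : ℕ+, (∀ p : ℕ+, (p : ℕ).Prime → ¬ p * p ∣ r) →
      ∃ d₁ ∈ D, ∃ d₂ ∈ D, sigma' r = sigma' d₁ ∩ sigma' d₂ := by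
  intro r _
  obtain ⟨φ, rfl⟩ := hdef
  obtain ⟨d, hd, hrd⟩ := hcof r
  obtain ⟨π, hrd', hcommon⟩ := exists_mulEquivOfPermPrimes_dvd_and_sigma'_inter_subset hrd
  refine ⟨d, hd, PNat.mulEquivOfPermPrimes π d,
    (realize_mulEquiv_comp_iff (PNat.mulEquivOfPermPrimes π) φ _).2 hd, ?_⟩
  exact (Set.subset_inter (sigma'_subset_of_dvd hrd) (sigma'_subset_of_dvd hrd')).antisymm hcommon
end

section
/- Let D ⊆ ℕ⁺ be ∅-definable and cofinal with respect to divisibility (for every c ∈ ℕ⁺ there exists d ∈ D with c ∣ d). Then for every c ∈ ℕ⁺ there exist k ∈ ℕ, elements d₁,…,d_k ∈ D, and an L-formula θ(v; w₁,…,w_k) such that c is the unique element of ℕ⁺ satisfying θ(·; d₁,…,d_k) in ℕ⁺. -/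
open FirstOrder Language

/-!
The elements definable over `D` form a submonoid of `ℕ+`, so it suffices to define every prime
`p`. Pick `d₀ ∈ D` divisible by `p`. For each other prime `q ∣ d₀`, take a prime `z ∤ d₀`: the
automorphism of `ℕ+` swapping the primes `q` and `z` preserves the `∅`-definable set `D`, fixes
`p`, and sends `d₀` to some `d_q ∈ D` with `p ∣ d_q` and `q ∤ d_q`. Then `p` is the only prime
dividing `d₀` and all the `d_q`, which is a first-order condition on these parameters.
-/

namespace FirstOrder.Language.Term

variable {M : Type*} [Monoid M] {α : Type*}

instance : One (L.Term α) := ⟨Constants.term (() : L.Constants)⟩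

instance : Mul (L.Term α) := ⟨Functions.apply₂ (() : L.Functions 2)⟩

@[simp] theorem realize_one (v : α → M) : (1 : L.Term α).realize v = 1 := rfl

@[simp] theorem realize_mul (v : α → M) (t s : L.Term α) :
    (t * s).realize v = t.realize v * s.realize v := rfl

end FirstOrder.Language.Term

instance {M N F : Type*} [Monoid M] [Monoid N] [FunLike F M N] [MonoidHomClass F M N] :
    L.StrongHomClass F M N where
  map_fun φ n f x := by
    match n, f with
    | 0, _ => exact map_one φ
    | 2, _ => exact map_mul φ (x 0) (x 1)
  map_rel _ _ r := r.elim

theorem map_mem_of_definable {M : Type*} [Monoid M] {D : Set M}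
    (hdef : ∃ φ : L.Formula (Fin 1), D = {a | φ.Realize (fun _ => a)}) (f : M ≃* M) {a : M}
    (ha : a ∈ D) : f a ∈ D := by
  obtain ⟨φ, rfl⟩ := hdef
  exact (StrongHomClass.realize_formula f φ (v := fun _ => a)).2 ha

open Term in
noncomputable def dvdFormula {α : Type*} (t s : L.Term α) : L.Formula α :=
  Formula.iExs Unit (equal (s.relabel Sum.inl) (t.relabel Sum.inl * var (Sum.inr ())))

open Term in
noncomputable def primeFormula {α : Type*} (t : L.Term α) : L.Formula α :=
  ∼(equal t 1) ⊓ Formula.iAlls Unit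
    (dvdFormula (var (Sum.inr ())) (t.relabel Sum.inl) ⟹
      (equal (var (Sum.inr ())) 1 ⊔ equal (var (Sum.inr ())) (t.relabel Sum.inl)))

theorem PNat.prime_def (p : ℕ+) : p.Prime ↔ p ≠ 1 ∧ ∀ m, m ∣ p → m = 1 ∨ m = p := by
  refine ⟨fun hp => ⟨hp.ne_one, fun m => (PNat.dvd_prime hp).1⟩, fun ⟨hp, hdvd⟩ => ?_⟩
  obtain ⟨q, hq, hqp⟩ := PNat.exists_prime_and_dvd hp
  rcases hdvd q hqp with rfl | rfl
  · exact absurd hq PNat.not_prime_one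
  · exact hq

section Realize

variable {α : Type*}

@[simp] theorem realize_dvdFormula {M : Type*} [Monoid M] (t s : L.Term α) (v : α → M) :
    (dvdFormula t s).Realize v ↔ t.realize v ∣ s.realize v := by
  simp only [dvdFormula, Formula.realize_iExs, Formula.realize_equal, Term.realize_mul,
    Term.realize_relabel, Term.realize_var, Sum.elim_comp_inl, Sum.elim_inr]
  exact ⟨fun ⟨w, h⟩ => ⟨w (), h⟩, fun ⟨c, h⟩ => ⟨fun _ => c, h⟩⟩

@[simp] theorem realize_primeFormula (t : L.Term α) (v : α → ℕ+) :
    (primeFormula t).Realize v ↔ (t.realize v).Prime := by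
  simp only [primeFormula, Formula.realize_inf, Formula.realize_not, Formula.realize_iAlls,
    Formula.realize_imp, Formula.realize_sup, realize_dvdFormula, Formula.realize_equal,
    Term.realize_one, Term.realize_relabel, Term.realize_var, Sum.elim_comp_inl, Sum.elim_inr,
    PNat.prime_def]
  exact and_congr_right fun _ => ⟨fun h y => h fun _ => y, fun h w => h (w ())⟩

end Realize

/-- Parameters are indexed by an arbitrary finite type so that two families can be joined along
`ι ⊕ κ`. -/
def IsDefinableOver (L' : Language) {M : Type*} [L'.Structure M] (A : Set M) (c : M) : Prop :=
  ∃ (ι : Type) (_ : Finite ι) (d : ι → M) (θ : L'.Formula (Unit ⊕ ι)),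
    (∀ i, d i ∈ A) ∧ ∀ x, θ.Realize (Sum.elim (fun _ => x) d) ↔ x = c

namespace IsDefinableOver

theorem exists_fin {L' : Language} {M : Type*} [L'.Structure M] {A : Set M} {c : M}
    (h : IsDefinableOver L' A c) :
    ∃ (k : ℕ) (d : Fin k → M) (θ : L'.Formula (Unit ⊕ Fin k)),
      (∀ i, d i ∈ A) ∧ ∀ x, θ.Realize (Sum.elim (fun _ => x) d) ↔ x = c := by
  obtain ⟨ι, _, d, θ, hd, hθ⟩ := h
  let e := Finite.equivFin ι
  refine ⟨Nat.card ι, d ∘ e.symm, θ.relabel (Sum.map id e), fun i => hd _, fun x => ?_⟩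
  rw [Formula.realize_relabel, ← hθ x]
  congr! 1
  ext (_ | i) <;> simp

variable {M : Type*} [Monoid M] {A : Set M}

theorem one : IsDefinableOver L A 1 :=
  ⟨Empty, inferInstance, Empty.elim, Term.equal (Term.var (Sum.inl ())) 1, Empty.rec,
    fun x => by simp⟩

open Term in
theorem mul {a b : M} (ha : IsDefinableOver L A a) (hb : IsDefinableOver L A b) :
    IsDefinableOver L A (a * b) := by
  obtain ⟨ι, _, d, θ, hd, hθ⟩ := ha
  obtain ⟨κ, _, e, η, he, hη⟩ := hb
  refine ⟨ι ⊕ κ, inferInstance, Sum.elim d e,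
    Formula.iExs (Fin 2)
      (θ.relabel (Sum.elim (Function.const _ (Sum.inr 0)) (Sum.inl ∘ Sum.inr ∘ Sum.inl)) ⊓
        η.relabel (Sum.elim (Function.const _ (Sum.inr 1)) (Sum.inl ∘ Sum.inr ∘ Sum.inr)) ⊓
        equal (var (Sum.inl (Sum.inl ()))) (var (Sum.inr 0) * var (Sum.inr 1))),
    fun | .inl i => hd i | .inr j => he j, fun x => ?_⟩
  simp only [Formula.realize_iExs, Formula.realize_inf, Formula.realize_relabel,
    Formula.realize_equal, realize_mul, realize_var, Sum.comp_elim, Function.comp_const,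
    ← Function.comp_assoc, Sum.elim_comp_inl, Sum.elim_comp_inr, Sum.elim_inl, Sum.elim_inr]
  constructor
  · rintro ⟨w, ⟨hw₀, hw₁⟩, rfl⟩
    rw [(hθ _).1 hw₀, (hη _).1 hw₁]
  · rintro rfl
    exact ⟨![a, b], ⟨(hθ a).2 rfl, (hη b).2 rfl⟩, rfl⟩

end IsDefinableOver

open Term in
theorem isDefinableOver_of_forall_prime_dvd_iff {A : Set ℕ+} {ι : Type} [Finite ι] (d : ι → ℕ+)
    (hd : ∀ i, d i ∈ A) {p : ℕ+} (hp : ∀ x : ℕ+, (x.Prime ∧ ∀ i, x ∣ d i) ↔ x = p) :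
    IsDefinableOver L A p :=
  ⟨ι, inferInstance, d,
    primeFormula (var (Sum.inl ())) ⊓
      Formula.iInf fun i => dvdFormula (var (Sum.inl ())) (var (Sum.inr i)),
    hd, fun x => by simpa using hp x⟩

namespace PNat

theorem prod_map_factorMultiset_prod_map {σ τ : Nat.Primes → Nat.Primes}
    (h : Function.LeftInverse τ σ) (n : ℕ+) :
    PrimeMultiset.prod ((PrimeMultiset.prod (n.factorMultiset.map σ)).factorMultiset.map τ) =
      n := by
  have hmap : (n.factorMultiset.map σ).map τ = n.factorMultiset :=
    (Multiset.map_map _ _ _).trans (by rw [h.comp_eq_id]; exact Multiset.map_id _)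
  -- `PrimeMultiset` is a non-reducible synonym of `Multiset Nat.Primes`, which defeats `rw`.
  calc _ = PrimeMultiset.prod ((n.factorMultiset.map σ).map τ) :=
        congrArg (fun v => PrimeMultiset.prod (v.map τ)) (PrimeMultiset.factorMultiset_prod _)
    _ = n := (congrArg PrimeMultiset.prod hmap).trans (prod_factorMultiset n)

def permPrimes (σ : Equiv.Perm Nat.Primes) : ℕ+ ≃* ℕ+ where
  toFun n := PrimeMultiset.prod (n.factorMultiset.map σ)
  invFun n := PrimeMultiset.prod (n.factorMultiset.map σ.symm)
  left_inv := prod_map_factorMultiset_prod_map σ.left_inv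
  right_inv := prod_map_factorMultiset_prod_map σ.right_inv
  map_mul' m n := by
    have h : (m * n).factorMultiset.map σ = m.factorMultiset.map σ + n.factorMultiset.map σ :=
      (congrArg (Multiset.map σ) (factorMultiset_mul m n)).trans (Multiset.map_add _ _ _)
    exact (congrArg PrimeMultiset.prod h).trans (PrimeMultiset.prod_add _ _)

@[simp] theorem permPrimes_coe (σ : Equiv.Perm Nat.Primes) (p : Nat.Primes) :
    permPrimes σ p = σ p := by
  change PrimeMultiset.prod (Multiset.map σ (p : ℕ+).factorMultiset) = _
  rw [factorMultiset_ofPrime]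
  exact PrimeMultiset.prod_ofPrime (σ p)

theorem exists_prime_not_dvd (n : ℕ+) : ∃ z : Nat.Primes, ¬ (z : ℕ+) ∣ n := by
  obtain ⟨z, hz, hzp⟩ := Nat.exists_infinite_primes (n + 1)
  refine ⟨⟨z, hzp⟩, fun h => ?_⟩
  have : z ≤ n := PNat.coe_le_coe _ _ |>.2 (PNat.le_of_dvd h)
  omega

end PNat

section Definable

variable {D : Set ℕ+} (hdef : ∃ φ : L.Formula (Fin 1), D = {a | φ.Realize (fun _ => a)})
include hdef

theorem exists_mem_dvd_not_dvd {f : ℕ+} (hfD : f ∈ D) {p q : Nat.Primes} (hpf : (p : ℕ+) ∣ f)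
    (hpq : p ≠ q) : ∃ d ∈ D, (p : ℕ+) ∣ d ∧ ¬ (q : ℕ+) ∣ d := by
  obtain ⟨z, hzf⟩ := PNat.exists_prime_not_dvd f
  have hpz : p ≠ z := by rintro rfl; exact hzf hpf
  let σ := PNat.permPrimes (Equiv.swap q z)
  refine ⟨σ f, map_mem_of_definable hdef σ hfD, ?_, ?_⟩
  · have hσp : σ p = p := by simp [σ, Equiv.swap_apply_of_ne_of_ne hpq hpz]
    simpa [hσp] using map_dvd σ hpf
  · have hσz : σ z = q := by simp [σ]
    rwa [← hσz, map_dvd_iff]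

theorem isDefinableOver_prime {p : Nat.Primes} (hp : ∃ d ∈ D, (p : ℕ+) ∣ d) :
    IsDefinableOver L D p := by
  obtain ⟨d₀, hd₀D, hpd₀⟩ := hp
  let F := d₀.factorMultiset.toFinset.erase p
  have hsep (q : F) : ∃ d ∈ D, (p : ℕ+) ∣ d ∧ ¬ (q : ℕ+) ∣ d :=
    exists_mem_dvd_not_dvd hdef hd₀D hpd₀ (Finset.ne_of_mem_erase q.2).symm
  choose d hdD hpd hqd using hsep
  refine isDefinableOver_of_forall_prime_dvd_iff (Option.elim' d₀ d)
    (by rintro (_ | q); exacts [hd₀D, hdD q]) fun x => ⟨?_, ?_⟩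
  · rintro ⟨hx, hxd⟩
    by_contra hne
    let r : Nat.Primes := ⟨x, hx⟩
    have hrx : (r : ℕ+) = x := rfl
    have hr : r ∈ F := by
      refine Finset.mem_erase.2 ⟨fun h => hne (hrx ▸ congrArg Nat.Primes.toPNat h), ?_⟩
      refine Multiset.mem_toFinset.2
        (Multiset.count_pos.1 ((PNat.count_factorMultiset d₀ r 1).1 ?_))
      rw [pow_one, hrx]
      exact hxd none
    exact hqd ⟨r, hr⟩ (hxd (some ⟨r, hr⟩))
  · rintro rfl
    exact ⟨p.2, by rintro (_ | q); exacts [hpd₀, hpd q]⟩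

end Definable

/-- If `D ⊆ ℕ⁺` is `∅`-definable and cofinal with respect to divisibility, then every
element of `ℕ⁺` is definable over finitely many elements of `D`. -/
theorem cofinal_dcl_everything (D : Set ℕ+)
    (hdef : ∃ φ : L.Formula (Fin 1), D = {a | φ.Realize (fun _ => a)})
    (hcof : ∀ c : ℕ+, ∃ d ∈ D, c ∣ d) :
    ∀ c : ℕ+, ∃ (k : ℕ) (d : Fin k → ℕ+) (θ : L.Formula (Unit ⊕ Fin k)),
      (∀ i, d i ∈ D) ∧ ∀ x : ℕ+, θ.Realize (Sum.elim (fun _ => x) d) ↔ x = c := by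
  intro c
  apply IsDefinableOver.exists_fin
  rw [← PNat.prod_factorMultiset c]
  refine Multiset.prod_induction _ _ (fun _ _ => IsDefinableOver.mul) IsDefinableOver.one ?_
  intro x hx
  obtain ⟨p, -, rfl⟩ := Multiset.mem_map.1 hx
  exact isDefinableOver_prime hdef (hcof p)
end
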